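/- Let l be a literal such that the single-literal clause {l} belongs to the CNF formula F. Then {l} is superredundant in F if and only if {c ∈ F | ¬l ∉ c and c ≠ {l}} ∪ {c \ {¬l} | c ∈ F and ¬l ∈ c} ⊨ {l}. -/
import Mathlib


/-- A literal is a propositional variable (indexed by ℕ) with a sign. -/
abbrev Lit : Type := ℕ × Bool

/-- The complementary literal. -/
def negLit (l : Lit) : Lit := (l.1, !l.2)

/-- A clause is a finite set of literals. -/
abbrev Clause : Type := Finset Lit

/-- A clause is non-tautological: it contains no literal together with its complement. -/
def NonTauto (c : Clause) : Prop := ∀ l ∈ c, negLit l ∉ c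

/-- A CNF formula is a finite set of non-tautological clauses. -/
def IsCNF (F : Finset Clause) : Prop := ∀ c ∈ F, NonTauto c

/-- `Resolvent C D E`: the clauses `C = c₁ ∪ {x}` and `D = c₂ ∪ {¬x}` resolve on the
variable `x` into `E = c₁ ∪ c₂`, all three clauses being non-tautological. -/
def Resolvent (C D E : Clause) : Prop :=
  ∃ (x : ℕ) (c₁ c₂ : Clause),
    (x, true) ∉ c₁ ∧ (x, false) ∉ c₂ ∧
    NonTauto (insert (x, true) c₁) ∧ NonTauto (insert (x, false) c₂) ∧
    NonTauto (c₁ ∪ c₂) ∧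
    C = insert (x, true) c₁ ∧ D = insert (x, false) c₂ ∧ E = c₁ ∪ c₂

/-- The resolution closure of a formula: the smallest set of clauses containing `F`
and closed under resolution. -/
inductive ResCn (F : Finset Clause) : Clause → Prop
  | base {c : Clause} : c ∈ F → ResCn F c
  | step {C D E : Clause} : ResCn F C → ResCn F D → Resolvent C D E → ResCn F E

/-- A valuation satisfies a clause if it makes some literal of it true. -/
def satClause (v : ℕ → Bool) (c : Clause) : Prop := ∃ l ∈ c, v l.1 = l.2

/-- A valuation satisfies a set of clauses if it satisfies every clause in it. -/
def satSet (v : ℕ → Bool) (G : Set Clause) : Prop := ∀ c ∈ G, satClause v c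

/-- A set of clauses entails a clause: every valuation satisfying the set satisfies
the clause. -/
def entailsC (G : Set Clause) (c : Clause) : Prop :=
  ∀ v : ℕ → Bool, satSet v G → satClause v c

/-- A formula entails a formula. -/
def entailsF (F G : Finset Clause) : Prop :=
  ∀ v : ℕ → Bool, satSet v (↑F : Set Clause) → satSet v (↑G : Set Clause)

/-- Two formulae are equivalent if they are satisfied by the same valuations. -/
def equivF (F G : Finset Clause) : Prop :=
  ∀ v : ℕ → Bool, satSet v (↑F : Set Clause) ↔ satSet v (↑G : Set Clause)

/-- A clause `c` of `F` is superredundant in `F` if `ResCn(F) \ {c} ⊨ c`. -/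
def SuperRedundant (F : Finset Clause) (c : Clause) : Prop :=
  entailsC ({d | ResCn F d} \ {c}) c

/-- The size of a formula: the total number of literal occurrences in it. -/
def size (F : Finset Clause) : ℕ := ∑ c ∈ F, c.card

/-- The set of variables occurring (positively or negatively) in a formula. -/
def varsF (F : Finset Clause) : Set ℕ := {n | ∃ c ∈ F, ∃ b : Bool, (n, b) ∈ c}


lemma satClause_mono {v : ℕ → Bool} {c d : Clause} (h : c ⊆ d) (hc : satClause v c) :
    satClause v d := by
  obtain ⟨m, hm, hvm⟩ := hc
  exact ⟨m, h hm, hvm⟩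

lemma nonTauto_subset {c d : Clause} (h : c ⊆ d) (hd : NonTauto d) : NonTauto c :=
  fun m hm hmn => hd m (h hm) (h hmn)

lemma negLit_ne (l : Lit) : negLit l ≠ l := by
  simp [negLit, Prod.ext_iff]

lemma nonTauto_single (l : Lit) : NonTauto ({l} : Clause) := by
  intro m hm hmn
  rw [Finset.mem_singleton] at hm hmn
  rw [hm] at hmn
  exact negLit_ne l hmn

lemma resCn_erase (F : Finset Clause) (hF : IsCNF F) (l : Lit) (hl : ({l} : Clause) ∈ F)
    (c : Clause) (hc : c ∈ F) (hneg : negLit l ∈ c) : ResCn F (c.erase (negLit l)) := by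
  obtain ⟨x, b⟩ := l
  cases b
  · -- l = (x, false), negLit l = (x, true)
    have hnl : negLit (x, false) = (x, true) := rfl
    rw [hnl] at hneg ⊢
    refine ResCn.step (ResCn.base hc) (ResCn.base hl) ⟨x, c.erase (x, true), ∅, ?_, ?_, ?_, ?_, ?_, ?_, ?_, ?_⟩
    · exact Finset.notMem_erase _ _
    · exact Finset.notMem_empty _
    · rw [Finset.insert_erase hneg]; exact hF c hc
    · exact nonTauto_single _
    · rw [Finset.union_empty]
      exact nonTauto_subset (Finset.erase_subset _ _) (hF c hc)
    · exact (Finset.insert_erase hneg).symm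
    · rfl
    · exact (Finset.union_empty _).symm
  · -- l = (x, true), negLit l = (x, false)
    have hnl : negLit (x, true) = (x, false) := rfl
    rw [hnl] at hneg ⊢
    refine ResCn.step (ResCn.base hl) (ResCn.base hc) ⟨x, ∅, c.erase (x, false), ?_, ?_, ?_, ?_, ?_, ?_, ?_, ?_⟩
    · exact Finset.notMem_empty _
    · exact Finset.notMem_erase _ _
    · exact nonTauto_single _
    · rw [Finset.insert_erase hneg]; exact hF c hc
    · rw [Finset.empty_union]
      exact nonTauto_subset (Finset.erase_subset _ _) (hF c hc)
    · rfl
    · exact (Finset.insert_erase hneg).symm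
    · exact (Finset.empty_union _).symm

/-- a single-literal clause `{l}` of `F` is superredundant iff
`{c ∈ F | ¬l ∉ c, c ≠ {l}} ∪ {c \ {¬l} | c ∈ F, ¬l ∈ c} ⊨ {l}`. -/
theorem superredundant_single_literal
    (F : Finset Clause) (hF : IsCNF F) (l : Lit) (hl : ({l} : Clause) ∈ F) :
    SuperRedundant F {l} ↔
      entailsC ({c : Clause | c ∈ F ∧ negLit l ∉ c ∧ c ≠ ({l} : Clause)} ∪
                {d : Clause | ∃ c ∈ F, negLit l ∈ c ∧ d = c.erase (negLit l)})
        ({l} : Clause) := by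
  constructor
  · intro h v hG
    have key : ∀ d : Clause, ResCn F d → d = {l} ∨ satClause v (d.erase (negLit l)) := by
      intro d hd
      induction hd with
      | @base c hc =>
        by_cases hdl : c = {l}
        · exact Or.inl hdl
        right
        by_cases hneg : negLit l ∈ c
        · exact hG _ (Or.inr ⟨c, hc, hneg, rfl⟩)
        · rw [Finset.erase_eq_of_notMem hneg]
          exact hG _ (Or.inl ⟨hc, hneg, hdl⟩)
      | @step C D E hC hD hres ihC ihD =>
        obtain ⟨x, c₁, c₂, hx1, hx2, hT1, hT2, hT3, hCe, hDe, hEe⟩ := hres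
        subst hCe hDe hEe
        right
        rcases ihC with hC1 | hC1
        · have hlx : l = (x, true) := by
            have hm : (x, true) ∈ ({l} : Clause) := hC1 ▸ Finset.mem_insert_self _ _
            exact (Finset.mem_singleton.mp hm).symm
          have hnlx : negLit l = (x, false) := by rw [hlx]; rfl
          rcases ihD with hD1 | hD1
          · exfalso
            have hm : (x, false) ∈ ({l} : Clause) := hD1 ▸ Finset.mem_insert_self _ _
            rw [Finset.mem_singleton, hlx] at hm
            simp at hm
          · obtain ⟨m, hm, hvm⟩ := hD1
            have hm1 := Finset.ne_of_mem_erase hm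
            have hm2 := Finset.mem_of_mem_erase hm
            have hmne : m ≠ (x, false) := by
              intro hh; exact hm1 (by rw [hh, hnlx])
            have hmm : m ∈ c₂ := (Finset.mem_insert.mp hm2).resolve_left hmne
            exact ⟨m, Finset.mem_erase.mpr ⟨hm1, Finset.mem_union_right _ hmm⟩, hvm⟩
        · obtain ⟨m, hm, hvm⟩ := hC1
          have hm1 := Finset.ne_of_mem_erase hm
          have hm2 := Finset.mem_of_mem_erase hm
          by_cases hmx : m = (x, true)
          · rcases ihD with hD1 | hD1
            · exfalso
              have hm' : (x, false) ∈ ({l} : Clause) := hD1 ▸ Finset.mem_insert_self _ _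
              have hlx : l = (x, false) := (Finset.mem_singleton.mp hm').symm
              exact hm1 (by rw [hmx, hlx]; rfl)
            · obtain ⟨m', hm', hvm'⟩ := hD1
              have hm1' := Finset.ne_of_mem_erase hm'
              have hm2' := Finset.mem_of_mem_erase hm'
              have hmne' : m' ≠ (x, false) := by
                intro hh
                rw [hh] at hvm'
                rw [hmx] at hvm
                simp only at hvm hvm'
                rw [hvm] at hvm'
                exact Bool.noConfusion hvm'
              have hmm' : m' ∈ c₂ := (Finset.mem_insert.mp hm2').resolve_left hmne'
              exact ⟨m', Finset.mem_erase.mpr ⟨hm1', Finset.mem_union_right _ hmm'⟩, hvm'⟩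
          · have hmm : m ∈ c₁ := (Finset.mem_insert.mp hm2).resolve_left hmx
            exact ⟨m, Finset.mem_erase.mpr ⟨hm1, Finset.mem_union_left _ hmm⟩, hvm⟩
    apply h v
    intro d hd
    simp only [Set.mem_diff, Set.mem_setOf_eq, Set.mem_singleton_iff] at hd
    obtain ⟨hd1, hd2⟩ := hd
    rcases key d hd1 with h' | h'
    · exact absurd h' hd2
    · exact satClause_mono (Finset.erase_subset _ _) h'
  · intro h v hv
    apply h v
    intro c hc
    rcases hc with hc | hc
    · obtain ⟨hcF, hneg, hne⟩ := hc
      exact hv c ⟨ResCn.base hcF, by simpa using hne⟩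
    · obtain ⟨c0, hc0, hneg, rfl⟩ := hc
      refine hv _ ⟨resCn_erase F hF l hl c0 hc0 hneg, ?_⟩
      simp only [Set.mem_singleton_iff]
      intro heq
      have hlc : l ∈ c0 :=
        Finset.mem_of_mem_erase (heq ▸ Finset.mem_singleton_self l)
      exact hF c0 hc0 l hlc hneg
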